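/- arXiv:2407.05260 — 3 statements merged into one kernel-verified Lean document; each statement's English description precedes it below -/
import Mathlib

section
/- For every r ∈ ℝ and every V > 0 there exists p ∈ (0,1) such that p·Φ(r + √(V(1−p)/p)) + (1−p)·Φ(r − √(Vp/(1−p))) < Φ(r). -/
/-!
Since `Φ ≤ 1`, the first term exceeds `p Φ(r)` by at most `p`, while the second falls short of
`(1 - p) Φ(r)` by `(1 - p)(Φ(r) - Φ(r - b)) ≥ (1 - p) b φ(|r| + 1)` with `b = √(Vp/(1-p)) ≤ 1`.
The loss is of order `√p` and the gain of order `p`, so small `p` works. Taking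
`p = t² / (V + t²)` makes `b = t`, and any `0 < t ≤ 1` with `t < V φ(|r| + 1)` will do.
-/

noncomputable section

def stdNormalCDF (x : ℝ) : ℝ :=
  ∫ t in Set.Iic x, Real.exp (-t ^ 2 / 2) / Real.sqrt (2 * Real.pi)

end

open Real Set MeasureTheory ProbabilityTheory

lemma stdNormalCDF_eq_setIntegral_gaussianPDFReal (x : ℝ) :
    stdNormalCDF x = ∫ t in Iic x, gaussianPDFReal 0 1 t := by
  simp only [stdNormalCDF, gaussianPDFReal, NNReal.coe_one, mul_one, sub_zero]
  congr 1 with t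
  rw [div_eq_inv_mul]

lemma stdNormalCDF_nonneg (x : ℝ) : 0 ≤ stdNormalCDF x := by
  rw [stdNormalCDF_eq_setIntegral_gaussianPDFReal]
  exact setIntegral_nonneg measurableSet_Iic fun t _ ↦ gaussianPDFReal_nonneg 0 1 t

lemma stdNormalCDF_le_one (x : ℝ) : stdNormalCDF x ≤ 1 := by
  rw [stdNormalCDF_eq_setIntegral_gaussianPDFReal, ← integral_gaussianPDFReal_eq_one 0 one_ne_zero]
  exact setIntegral_le_integral (integrable_gaussianPDFReal 0 1)
    (.of_forall (gaussianPDFReal_nonneg 0 1))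

lemma gaussianPDFReal_le_of_abs_sub_le {μ : ℝ} {v : NNReal} {s t : ℝ} (h : |t - μ| ≤ |s - μ|) :
    gaussianPDFReal μ v s ≤ gaussianPDFReal μ v t := by
  unfold gaussianPDFReal
  gcongr _ * rexp (-?_ / _)
  exact sq_le_sq.2 h

lemma stdNormalCDF_sub_add_mul_le {x b s : ℝ} (hb : 0 ≤ b) (hbs : b ≤ s) :
    stdNormalCDF (x - b) + b * gaussianPDFReal 0 1 (|x| + s) ≤ stdNormalCDF x := by
  have hincr :
      stdNormalCDF x - stdNormalCDF (x - b) = ∫ t in (x - b)..x, gaussianPDFReal 0 1 t := by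
    simp only [stdNormalCDF_eq_setIntegral_gaussianPDFReal]
    exact intervalIntegral.integral_Iic_sub_Iic (integrable_gaussianPDFReal 0 1).integrableOn
      (integrable_gaussianPDFReal 0 1).integrableOn
  have hlow : ∫ _ in (x - b)..x, gaussianPDFReal 0 1 (|x| + s)
      ≤ ∫ t in (x - b)..x, gaussianPDFReal 0 1 t := by
    refine intervalIntegral.integral_mono_on (by linarith) intervalIntegrable_const
      (integrable_gaussianPDFReal 0 1).intervalIntegrable fun t ht ↦ ?_
    apply gaussianPDFReal_le_of_abs_sub_le
    rw [sub_zero, sub_zero, abs_le]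
    constructor <;> cases abs_cases x <;> cases abs_cases (|x| + s) <;> linarith [ht.1, ht.2]
  rw [intervalIntegral.integral_const, smul_eq_mul, sub_sub_cancel] at hlow
  linarith

/-- For every `r ∈ ℝ` and `V > 0` there exists `p ∈ (0,1)` such that
`p·Φ(r + √(V(1−p)/p)) + (1−p)·Φ(r − √(Vp/(1−p))) < Φ(r)`. -/
theorem stmt_3 (r V : ℝ) (hV : 0 < V) :
    ∃ p ∈ Set.Ioo (0 : ℝ) 1,
      p * stdNormalCDF (r + Real.sqrt (V * (1 - p) / p))
        + (1 - p) * stdNormalCDF (r - Real.sqrt (V * p / (1 - p)))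
        < stdNormalCDF r := by
  set c := gaussianPDFReal 0 1 (|r| + 1)
  have hc : 0 < c := gaussianPDFReal_pos 0 1 _ one_ne_zero
  set t := min 1 (V * c / 2)
  have ht : 0 < t := lt_min one_pos (by positivity)
  have htc : t < V * c := (min_le_right _ _).trans_lt (by linarith [mul_pos hV hc])
  have hVt : 0 < V + t ^ 2 := by positivity
  refine ⟨t ^ 2 / (V + t ^ 2), ⟨by positivity, (div_lt_one hVt).2 (by linarith)⟩, ?_⟩
  have h1p : 1 - t ^ 2 / (V + t ^ 2) = V / (V + t ^ 2) := by field_simp; ring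
  have hshift : √(V * (t ^ 2 / (V + t ^ 2)) / (1 - t ^ 2 / (V + t ^ 2))) = t := by
    rw [h1p, mul_div_assoc', div_div_div_cancel_right₀ hVt.ne', mul_div_cancel_left₀ _ hV.ne',
      sqrt_sq ht.le]
  rw [hshift, h1p]
  have hdown := stdNormalCDF_sub_add_mul_le (x := r) ht.le (min_le_left 1 (V * c / 2))
  rw [div_mul_eq_mul_div, div_mul_eq_mul_div, ← add_div, div_lt_iff₀ hVt]
  calc t ^ 2 * stdNormalCDF (r + √(V * (V / (V + t ^ 2)) / (t ^ 2 / (V + t ^ 2))))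
        + V * stdNormalCDF (r - t)
      ≤ t ^ 2 * 1 + V * (stdNormalCDF r - t * c) := by
        gcongr
        exacts [stdNormalCDF_le_one _, by linarith]
    _ < stdNormalCDF r * (V + t ^ 2) := by
        nlinarith [mul_lt_mul_of_pos_left htc ht, stdNormalCDF_nonneg r]
end

section
/- Let Γ₀ < Γ < Γ*, let P* be any maximizer achieving C(Γ) and Q* := P*W with Q*(b) > 0 for all b. Assume C is differentiable at Γ with derivative λ = C′(Γ) and that λ ≥ 0. Then for every n ≥ 1 and every x = (x₁,…,xₙ) ∈ 𝒜ⁿ with (1/n)Σᵢ c(xᵢ) ≤ Γ, one has Σ_{i=1}^n Σ_{b∈ℬ} W(b|xᵢ)·log(W(b|xᵢ)/Q*(b)) ≤ n·C(Γ) (summands with W(b|xᵢ) = 0 read as 0). -/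
/-!
Mixing a small weight `ε` of an arbitrary input law `P'` into `P*` gives an input of cost at most
`Γ + ε (c(P') - Γ)`, so its mutual information stays below `C(Γ + ε (c(P') - Γ))`, with equality
at `ε = 0`. Comparing right derivatives at `ε = 0` yields the Kuhn–Tucker bound
`Σ_a P'(a) D(W(·|a) ‖ Q*) ≤ C(Γ) + λ (c(P') - Γ)`. Taking `P'` a point mass bounds each letter
of `x`, and summing over the letters, `λ ≥ 0` turns the cost constraint into the claim.
-/

open scoped BigOperators

noncomputable section
namespace Paper

variable {𝒜 ℬ : Type*} [Fintype 𝒜] [Fintype ℬ] [Nonempty 𝒜] [Nonempty ℬ]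

/-- `W` is a channel from `𝒜` to `ℬ`. -/
def IsChannel (W : 𝒜 → ℬ → ℝ) : Prop :=
  (∀ a b, 0 ≤ W a b) ∧ ∀ a, ∑ b, W a b = 1

/-- `P` is a probability vector on `𝒜`. -/
def IsProbVec (P : 𝒜 → ℝ) : Prop := (∀ a, 0 ≤ P a) ∧ ∑ a, P a = 1

/-- Average cost `c(P) = Σ_a P(a)c(a)`. -/
def avgCost (c : 𝒜 → ℝ) (P : 𝒜 → ℝ) : ℝ := ∑ a, P a * c a

/-- Output distribution `PW(b) = Σ_a P(a)W(b|a)`. -/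
def outDist (W : 𝒜 → ℬ → ℝ) (P : 𝒜 → ℝ) (b : ℬ) : ℝ := ∑ a, P a * W a b

/-- Mutual information `I(P,W)`; summands with `P(a)W(b|a) = 0` vanish. -/
def mutInfo (W : 𝒜 → ℬ → ℝ) (P : 𝒜 → ℝ) : ℝ :=
  ∑ a, ∑ b, P a * W a b * Real.log (W a b / outDist W P b)

/-- The capacity-cost function `C(Γ)`. -/
def capacityCost (W : 𝒜 → ℬ → ℝ) (c : 𝒜 → ℝ) (Γ : ℝ) : ℝ :=
  sSup {x : ℝ | ∃ P : 𝒜 → ℝ, IsProbVec P ∧ avgCost c P ≤ Γ ∧ mutInfo W P = x}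

/-- The unconstrained capacity `max_P I(P,W)`. -/
def capacity (W : 𝒜 → ℬ → ℝ) : ℝ :=
  sSup {x : ℝ | ∃ P : 𝒜 → ℝ, IsProbVec P ∧ mutInfo W P = x}

/-- `Γ₀ = min_a c(a)`. -/
def Gamma0 (c : 𝒜 → ℝ) : ℝ := ⨅ a, c a

/-- `Γ* = inf{Γ : C(Γ) = max_P I(P,W)}`. -/
def GammaStar (W : 𝒜 → ℬ → ℝ) (c : 𝒜 → ℝ) : ℝ :=
  sInf {Γ : ℝ | capacityCost W c Γ = capacity W}

/-- `Π*`: the set of capacity-cost-achieving input distributions at cost `Γ`. -/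
def capAchievers (W : 𝒜 → ℬ → ℝ) (c : 𝒜 → ℝ) (Γ : ℝ) : Set (𝒜 → ℝ) :=
  {P | IsProbVec P ∧ avgCost c P ≤ Γ ∧ mutInfo W P = capacityCost W c Γ}

/-- `ν_a`: the conditional information variance of input letter `a` w.r.t. output law `Q`. -/
def nu (W : 𝒜 → ℬ → ℝ) (Q : ℬ → ℝ) (a : 𝒜) : ℝ :=
  ∑ b, W a b * (Real.log (W a b / Q b)) ^ 2
    - (∑ b, W a b * Real.log (W a b / Q b)) ^ 2

/-- ℓ¹ distance between probability vectors. -/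
def l1dist (P Q : 𝒜 → ℝ) : ℝ := ∑ a, |P a - Q a|

open Filter Topology

theorem le_of_hasDerivAt_of_eventually_le {f g : ℝ → ℝ} {f' g' x : ℝ}
    (hf : HasDerivAt f f' x) (hg : HasDerivAt g g' x) (hfg : f x = g x)
    (hle : ∀ᶠ t in 𝓝[>] x, f t ≤ g t) : f' ≤ g' := by
  have hgt : 𝓝[>] x ≤ 𝓝[≠] x := nhdsWithin_mono x fun t ht => ne_of_gt ht
  refine le_of_tendsto_of_tendsto ((hasDerivAt_iff_tendsto_slope.1 hf).mono_left hgt)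
    ((hasDerivAt_iff_tendsto_slope.1 hg).mono_left hgt) ?_
  filter_upwards [hle, self_mem_nhdsWithin] with t hft hxt
  rw [slope_def_field, slope_def_field, hfg]
  exact div_le_div_of_nonneg_right (by linarith) (sub_nonneg.2 (le_of_lt hxt))

theorem hasDerivAt_const_add_mul (A B x : ℝ) : HasDerivAt (fun ε => A + ε * B) B x :=
  (hasDerivAt_mul_const B).const_add A

section

variable {α β : Type*} [Fintype α]

theorem sum_add_smul_sub_mul (P P' f : α → ℝ) (ε : ℝ) :
    ∑ a, (P + ε • (P' - P)) a * f a
      = ∑ a, P a * f a + ε * (∑ a, P' a * f a - ∑ a, P a * f a) := by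
  simp only [Pi.add_apply, Pi.smul_apply, Pi.sub_apply, smul_eq_mul, add_mul, sub_mul,
    mul_assoc, Finset.sum_add_distrib, Finset.sum_sub_distrib, ← Finset.mul_sum, mul_sub]

theorem IsProbVec.add_smul_sub {P P' : α → ℝ} (hP : IsProbVec P) (hP' : IsProbVec P') {ε : ℝ}
    (hε₀ : 0 ≤ ε) (hε₁ : ε ≤ 1) : IsProbVec (P + ε • (P' - P)) := by
  refine ⟨fun a => ?_, ?_⟩
  · have h := add_nonneg (mul_nonneg (sub_nonneg.2 hε₁) (hP.1 a)) (mul_nonneg hε₀ (hP'.1 a))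
    simp only [Pi.add_apply, Pi.smul_apply, Pi.sub_apply, smul_eq_mul]
    linarith
  · simpa [hP.2, hP'.2] using sum_add_smul_sub_mul P P' 1 ε

theorem isProbVec_single [DecidableEq α] (a : α) : IsProbVec (Pi.single a 1 : α → ℝ) :=
  ⟨fun a' => by by_cases h : a' = a <;> simp [h], by simp⟩

theorem avgCost_add_smul_sub (c P P' : α → ℝ) (ε : ℝ) :
    avgCost c (P + ε • (P' - P)) = avgCost c P + ε * (avgCost c P' - avgCost c P) :=
  sum_add_smul_sub_mul P P' c ε

theorem outDist_add_smul_sub (W : α → β → ℝ) (P P' : α → ℝ) (ε : ℝ) (b : β) :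
    outDist W (P + ε • (P' - P)) b
      = outDist W P b + ε * (outDist W P' b - outDist W P b) :=
  sum_add_smul_sub_mul P P' (fun a => W a b) ε

variable [Fintype β]

def relEntropy (p q : β → ℝ) : ℝ := ∑ b, p b * Real.log (p b / q b)

theorem relEntropy_eq_sub {p q : β → ℝ} (hq : ∀ b, q b ≠ 0) :
    relEntropy p q = ∑ b, p b * Real.log (p b) - ∑ b, p b * Real.log (q b) := by
  rw [relEntropy, ← Finset.sum_sub_distrib]
  refine Finset.sum_congr rfl fun b _ => ?_
  rcases eq_or_ne (p b) 0 with hp | hp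
  · simp [hp]
  · rw [Real.log_div hp (hq b), mul_sub]

theorem sum_mul_sum_mul_eq_sum_outDist_mul (W : α → β → ℝ) (P : α → ℝ) (g : β → ℝ) :
    ∑ a, P a * ∑ b, W a b * g b = ∑ b, outDist W P b * g b := by
  simp only [outDist, Finset.mul_sum, Finset.sum_mul, mul_assoc]
  exact Finset.sum_comm

theorem sum_outDist {W : α → β → ℝ} (hW : IsChannel W) (P : α → ℝ) :
    ∑ b, outDist W P b = ∑ a, P a := by
  simpa [hW.2] using (sum_mul_sum_mul_eq_sum_outDist_mul W P 1).symm

theorem mutInfo_eq_sum_relEntropy (W : α → β → ℝ) (P : α → ℝ) :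
    mutInfo W P = ∑ a, P a * relEntropy (W a) (outDist W P) := by
  simp only [mutInfo, relEntropy, Finset.mul_sum, mul_assoc]

theorem mutInfo_eq_sub (W : α → β → ℝ) (P : α → ℝ) (hQ : ∀ b, outDist W P b ≠ 0) :
    mutInfo W P = ∑ a, P a * ∑ b, W a b * Real.log (W a b)
      - ∑ b, outDist W P b * Real.log (outDist W P b) := by
  simp only [mutInfo_eq_sum_relEntropy, relEntropy_eq_sub hQ, mul_sub, Finset.sum_sub_distrib,
    sum_mul_sum_mul_eq_sum_outDist_mul]

theorem mutInfo_le_card {W : α → β → ℝ} (hW : IsChannel W) {P : α → ℝ} (hP : IsProbVec P) :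
    mutInfo W P ≤ Fintype.card β := by
  have hterm : ∀ a b, P a * W a b * Real.log (W a b / outDist W P b)
      ≤ P a * W a b / outDist W P b := fun a b => by
    have hQ : 0 ≤ outDist W P b :=
      Finset.sum_nonneg fun a _ => mul_nonneg (hP.1 a) (hW.1 a b)
    have hW₁ : W a b ≤ 1 :=
      (hW.2 a).le.trans' (Finset.single_le_sum (fun b _ => hW.1 a b) (Finset.mem_univ b))
    -- `log (W/Q) ≤ W/Q ≤ 1/Q`, which also covers `Q = 0` through `log 0 = 0` and `1/0 = 0`
    have hlog : Real.log (W a b / outDist W P b) ≤ 1 / outDist W P b :=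
      (Real.log_le_self (div_nonneg (hW.1 a b) hQ)).trans
        (div_le_div_of_nonneg_right hW₁ hQ)
    exact (mul_le_mul_of_nonneg_left hlog (mul_nonneg (hP.1 a) (hW.1 a b))).trans_eq
      (mul_one_div _ _)
  calc mutInfo W P ≤ ∑ b, ∑ a, P a * W a b / outDist W P b := by
        rw [mutInfo, Finset.sum_comm]
        exact Finset.sum_le_sum fun b _ => Finset.sum_le_sum fun a _ => hterm a b
    _ ≤ ∑ _b : β, (1 : ℝ) := Finset.sum_le_sum fun b _ => by
        rw [← Finset.sum_div]
        exact div_self_le_one _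
    _ = Fintype.card β := by simp

theorem mutInfo_le_capacityCost {W : α → β → ℝ} (hW : IsChannel W) {c P : α → ℝ} {Γ : ℝ}
    (hP : IsProbVec P) (hcost : avgCost c P ≤ Γ) : mutInfo W P ≤ capacityCost W c Γ :=
  le_csSup ⟨(Fintype.card β : ℝ), by rintro _ ⟨P, hP, -, rfl⟩; exact mutInfo_le_card hW hP⟩
    ⟨P, hP, hcost, rfl⟩

theorem hasDerivAt_mutInfo_add_smul_sub {W : α → β → ℝ} (hW : IsChannel W) {P P' : α → ℝ}
    (hsum : ∑ a, P' a = ∑ a, P a) (hQ : ∀ b, 0 < outDist W P b) :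
    HasDerivAt (fun ε : ℝ => mutInfo W (P + ε • (P' - P)))
      (∑ a, P' a * relEntropy (W a) (outDist W P) - mutInfo W P) 0 := by
  set Q := outDist W P
  set Q' := outDist W P'
  set H : α → ℝ := fun a => ∑ b, W a b * Real.log (W a b)
  have hQε : ∀ᶠ ε in 𝓝 (0 : ℝ), ∀ b, outDist W (P + ε • (P' - P)) b ≠ 0 := by
    refine eventually_all.2 fun b => ?_
    have hcont : Continuous fun ε : ℝ => outDist W (P + ε • (P' - P)) b := by
      simp only [outDist_add_smul_sub]; fun_prop
    exact (hcont.tendsto 0).eventually_ne (by simpa using (hQ b).ne')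
  have hmutInfo : (fun ε : ℝ => mutInfo W (P + ε • (P' - P))) =ᶠ[𝓝 0] fun ε =>
      (∑ a, P a * H a + ε * (∑ a, P' a * H a - ∑ a, P a * H a))
        - ∑ b, (Q b + ε * (Q' b - Q b)) * Real.log (Q b + ε * (Q' b - Q b)) := by
    filter_upwards [hQε] with ε hε
    rw [mutInfo_eq_sub W _ hε, sum_add_smul_sub_mul]
    simp only [outDist_add_smul_sub]
    rfl
  have hentropy : HasDerivAt
      (fun ε : ℝ => ∑ b, (Q b + ε * (Q' b - Q b)) * Real.log (Q b + ε * (Q' b - Q b)))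
      (∑ b, (Real.log (Q b) + 1) * (Q' b - Q b)) 0 :=
    HasDerivAt.fun_sum fun b _ => (Real.hasDerivAt_mul_log (hQ b).ne').comp_of_eq 0
      (hasDerivAt_const_add_mul (Q b) (Q' b - Q b) 0) (by simp)
  have hderiv := (hasDerivAt_const_add_mul (∑ a, P a * H a)
    (∑ a, P' a * H a - ∑ a, P a * H a) 0).sub hentropy
  refine (hderiv.congr_of_eventuallyEq hmutInfo).congr_deriv ?_
  have hQsum : ∑ b, Q' b = ∑ b, Q b := by simp only [Q, Q', sum_outDist hW, hsum]
  simp only [relEntropy_eq_sub fun b => (hQ b).ne', mul_sub, Finset.sum_sub_distrib,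
    sum_mul_sum_mul_eq_sum_outDist_mul, mutInfo_eq_sub W P fun b => (hQ b).ne', add_mul,
    Finset.sum_add_distrib, one_mul, hQsum]
  simp only [H, Q, Q', mul_comm (Real.log _)]
  ring

theorem sum_mul_relEntropy_le_of_hasDerivAt {W : α → β → ℝ} (hW : IsChannel W) {c : α → ℝ}
    {Γ lam : ℝ} {Pstar : α → ℝ} (hPstar : Pstar ∈ capAchievers W c Γ)
    (hQ : ∀ b, 0 < outDist W Pstar b) (hderiv : HasDerivAt (capacityCost W c) lam Γ)
    {P : α → ℝ} (hP : IsProbVec P) :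
    ∑ a, P a * relEntropy (W a) (outDist W Pstar)
      ≤ capacityCost W c Γ + lam * (avgCost c P - Γ) := by
  obtain ⟨hPstar, hcost, hmutInfo⟩ := hPstar
  have hcapacity : HasDerivAt (fun ε => capacityCost W c (Γ + ε * (avgCost c P - Γ)))
      (lam * (avgCost c P - Γ)) 0 :=
    hderiv.comp_of_eq 0 (hasDerivAt_const_add_mul Γ _ 0) (by simp)
  have hle : ∀ᶠ ε in 𝓝[>] 0, mutInfo W (Pstar + ε • (P - Pstar))
      ≤ capacityCost W c (Γ + ε * (avgCost c P - Γ)) := by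
    filter_upwards [Ioo_mem_nhdsGT zero_lt_one] with ε ⟨hε₀, hε₁⟩
    refine mutInfo_le_capacityCost hW (hPstar.add_smul_sub hP hε₀.le hε₁.le) ?_
    rw [avgCost_add_smul_sub]
    nlinarith
  have := le_of_hasDerivAt_of_eventually_le
    (hasDerivAt_mutInfo_add_smul_sub hW (hP.2.trans hPstar.2.symm) hQ) hcapacity
    (by simp [hmutInfo]) hle
  linarith

theorem relEntropy_le_of_hasDerivAt {W : α → β → ℝ} (hW : IsChannel W) {c : α → ℝ}
    {Γ lam : ℝ} {Pstar : α → ℝ} (hPstar : Pstar ∈ capAchievers W c Γ)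
    (hQ : ∀ b, 0 < outDist W Pstar b) (hderiv : HasDerivAt (capacityCost W c) lam Γ) (a : α) :
    relEntropy (W a) (outDist W Pstar) ≤ capacityCost W c Γ + lam * (c a - Γ) := by
  classical
  simpa [avgCost, Pi.single_apply] using
    sum_mul_relEntropy_le_of_hasDerivAt hW hPstar hQ hderiv (isProbVec_single a)

end

theorem stmt_8_general (W : 𝒜 → ℬ → ℝ) (hW : IsChannel W) (c : 𝒜 → ℝ) (Γ : ℝ)
    (Pstar : 𝒜 → ℝ) (hPstar : Pstar ∈ capAchievers W c Γ)
    (hQ : ∀ b, 0 < outDist W Pstar b)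
    (lam : ℝ) (hderiv : HasDerivAt (capacityCost W c) lam Γ) (hlam : 0 ≤ lam) :
    ∀ n : ℕ, 1 ≤ n → ∀ x : Fin n → 𝒜, (∑ i, c (x i)) ≤ n * Γ →
      ∑ i, ∑ b, W (x i) b * Real.log (W (x i) b / outDist W Pstar b)
        ≤ n * capacityCost W c Γ := by
  intro n _ x hx
  calc ∑ i, relEntropy (W (x i)) (outDist W Pstar)
      ≤ ∑ i, (capacityCost W c Γ + lam * (c (x i) - Γ)) :=
        Finset.sum_le_sum fun i _ => relEntropy_le_of_hasDerivAt hW hPstar hQ hderiv (x i)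
    _ = n * capacityCost W c Γ + lam * (∑ i, c (x i) - n * Γ) := by
        simp only [Finset.sum_add_distrib, ← Finset.mul_sum, Finset.sum_sub_distrib,
          Finset.sum_const, Finset.card_univ, Fintype.card_fin, nsmul_eq_mul]
    _ ≤ n * capacityCost W c Γ :=
        add_le_of_nonpos_right (mul_nonpos_of_nonneg_of_nonpos hlam (sub_nonpos.2 hx))

/-- If `C` is differentiable at `Γ` with derivative `λ ≥ 0`, then for every `n ≥ 1` and every
input sequence of average cost at most `Γ`, the total mean information density is at most
`n·C(Γ)`. -/
theorem stmt_8 (W : 𝒜 → ℬ → ℝ) (hW : IsChannel W) (c : 𝒜 → ℝ) (cmax : ℝ)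
    (hc : ∀ a, 0 ≤ c a ∧ c a ≤ cmax)
    (Γ : ℝ) (hΓ₁ : Gamma0 c < Γ) (hΓ₂ : Γ < GammaStar W c)
    (Pstar : 𝒜 → ℝ) (hPstar : Pstar ∈ capAchievers W c Γ)
    (hQ : ∀ b, 0 < outDist W Pstar b)
    (lam : ℝ) (hderiv : HasDerivAt (capacityCost W c) lam Γ) (hlam : 0 ≤ lam) :
    ∀ n : ℕ, 1 ≤ n → ∀ x : Fin n → 𝒜, (∑ i, c (x i)) ≤ n * Γ →
      ∑ i, ∑ b, W (x i) b * Real.log (W (x i) b / outDist W Pstar b)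
        ≤ n * capacityCost W c Γ :=
  stmt_8_general W hW c Γ Pstar hPstar hQ lam hderiv hlam

end Paper
end
end

section
/- Let S ⊆ 𝒜ⁿ be nonempty. For 0 ≤ k ≤ n−1 and x^k ∈ 𝒜^k, let 𝒜_{x^k} := { x ∈ 𝒜 : (x^k, x) is a prefix of some element of S }, and fix an element (a₀,…,a_{n−1}) ∈ S. Given any controller F, define the modified controller F_S by: F_S(·|x^k,y^k) is F(·|x^k,y^k) conditioned on 𝒜_{x^k} if F(𝒜_{x^k}|x^k,y^k) > 0; uniform on 𝒜_{x^k} if F(𝒜_{x^k}|x^k,y^k) = 0 and 𝒜_{x^k} ≠ ∅; and the point mass at a_k otherwise. Then: (i) (F_S∘W)(S × ℬⁿ) = 1; and (ii) for every (xⁿ,yⁿ) with xⁿ ∈ S, (F_S∘W)(xⁿ,yⁿ) ≥ (F∘W)(xⁿ,yⁿ). -/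
/-!
Each row of `F_S` is a probability vector, so `F_S∘W` has total mass one. Along a sequence `xⁿ`
of positive `F_S`-probability, every `x_k` lies in `𝒜_{x^k}` as soon as `𝒜_{x^k}` is nonempty;
starting from `S ≠ ∅`, induction on `k` shows that every prefix of `xⁿ` extends to an element of
`S`, so `xⁿ ∈ S`, which gives (i). For (ii), compare factor by factor: on `𝒜_{x^k}`
conditioning divides by a mass `≤ 1`, and when that mass is zero `F(x_k|x^k,y^k) = 0` anyway.
-/

open scoped BigOperators Classical

noncomputable section
namespace Paper

variable {𝒜 ℬ : Type*} [Fintype 𝒜] [Fintype ℬ] [Nonempty 𝒜] [Nonempty ℬ]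
  [DecidableEq 𝒜] [DecidableEq ℬ]

/-- A controller: for each time `k` it maps the past inputs `x^k` and outputs `y^k` to a
distribution on the next input. -/
def Ctrl (𝒜 ℬ : Type*) (n : ℕ) : Type _ :=
  ∀ k : Fin n, (Fin k.val → 𝒜) → (Fin k.val → ℬ) → 𝒜 → ℝ

/-- Restriction of a length-`n` sequence to the times before `k`. -/
def pre {α : Type*} {n : ℕ} (x : Fin n → α) (k : Fin n) : Fin k.val → α :=
  fun i => x ⟨i.val, i.isLt.trans k.isLt⟩

/-- Every row of a controller is a probability vector. -/
def IsController {n : ℕ} (F : Ctrl 𝒜 ℬ n) : Prop :=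
  ∀ (k : Fin n) (xs : Fin k.val → 𝒜) (ys : Fin k.val → ℬ),
    (∀ a, 0 ≤ F k xs ys a) ∧ ∑ a, F k xs ys a = 1

/-- The joint law `(F∘W)(xⁿ,yⁿ) = Π_k F(x_k|x^{k−1},y^{k−1})·W(y_k|x_k)`. -/
def ctrlLaw (W : 𝒜 → ℬ → ℝ) {n : ℕ} (F : Ctrl 𝒜 ℬ n)
    (x : Fin n → 𝒜) (y : Fin n → ℬ) : ℝ :=
  ∏ k, F k (pre x k) (pre y k) (x k) * W (x k) (y k)

/-- `𝒜_{x^k}`: the letters `x` such that `(x^k, x)` is a prefix of some element of `S`. -/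
def prefExt {n : ℕ} (S : Set (Fin n → 𝒜)) (k : Fin n) (xs : Fin k.val → 𝒜) : Set 𝒜 :=
  {x | ∃ z ∈ S, (∀ i : Fin k.val, z ⟨i.val, i.isLt.trans k.isLt⟩ = xs i) ∧ z k = x}

/-- The modified controller `F_S`: condition `F` on `𝒜_{x^k}` when it has positive mass;
otherwise use the uniform distribution on `𝒜_{x^k}` if it is nonempty; otherwise the point
mass at `a_k` for a fixed `(a₀,…,a_{n−1}) ∈ S`. -/
def modCtrl {n : ℕ} (S : Set (Fin n → 𝒜)) (a : Fin n → 𝒜) (F : Ctrl 𝒜 ℬ n) :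
    Ctrl 𝒜 ℬ n := fun k xs ys x =>
  let A : Finset 𝒜 := Finset.univ.filter (fun x' => x' ∈ prefExt S k xs)
  let mass : ℝ := ∑ x' ∈ A, F k xs ys x'
  if 0 < mass then (if x ∈ A then F k xs ys x / mass else 0)
  else if A.Nonempty then (if x ∈ A then (A.card : ℝ)⁻¹ else 0)
  else if x = a k then 1 else 0

/-- The row `modCtrl S a F k xs ys` is definitionally
`condWithFallback (F k xs ys) 𝒜_{x^k} (a k)`. -/
def condWithFallback {α : Type*} [DecidableEq α] (p : α → ℝ) (A : Finset α) (c : α) (x : α) : ℝ :=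
  if 0 < ∑ x' ∈ A, p x' then (if x ∈ A then p x / ∑ x' ∈ A, p x' else 0)
  else if A.Nonempty then (if x ∈ A then (A.card : ℝ)⁻¹ else 0)
  else if x = c then 1 else 0

section CondWithFallback

variable {α : Type*} [DecidableEq α] {p : α → ℝ} {A : Finset α} {c x : α}

lemma condWithFallback_nonneg (hp : ∀ x, 0 ≤ p x) : 0 ≤ condWithFallback p A c x := by
  unfold condWithFallback
  split_ifs with hpos
  all_goals first | exact div_nonneg (hp x) hpos.le | positivity

lemma sum_condWithFallback [Fintype α] : ∑ x, condWithFallback p A c x = 1 := by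
  unfold condWithFallback
  split_ifs with hpos hA
  · rw [Finset.sum_ite_mem, Finset.univ_inter, ← Finset.sum_div, div_self hpos.ne']
  · rw [Finset.sum_ite_mem, Finset.univ_inter, Finset.sum_const, nsmul_eq_mul,
      mul_inv_cancel₀ (by exact_mod_cast hA.card_ne_zero)]
  · simp

lemma mem_of_condWithFallback_ne_zero (hA : A.Nonempty) (h : condWithFallback p A c x ≠ 0) :
    x ∈ A := by
  by_contra hx
  unfold condWithFallback at h
  split_ifs at h <;> simp_all

lemma le_condWithFallback [Fintype α] (hp : ∀ x, 0 ≤ p x) (hp₁ : ∑ x, p x ≤ 1) (hx : x ∈ A) :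
    p x ≤ condWithFallback p A c x := by
  have hpx_le : p x ≤ ∑ x' ∈ A, p x' := Finset.single_le_sum (fun i _ => hp i) hx
  unfold condWithFallback
  split_ifs with hpos hA
  · have hmass_le : ∑ x' ∈ A, p x' ≤ 1 :=
      (Finset.sum_le_univ_sum_of_nonneg hp).trans hp₁
    rw [le_div_iff₀ hpos]
    exact mul_le_of_le_one_right (hp x) hmass_le
  · have : p x = 0 := le_antisymm (hpx_le.trans (not_lt.mp hpos)) (hp x)
    rw [this]
    positivity
  all_goals exact absurd ⟨x, hx⟩ hA

end CondWithFallback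

section ModCtrl

variable {α β : Type*} [Fintype α] [DecidableEq α] {n : ℕ} {S : Set (Fin n → α)}
  {a : Fin n → α} {F : Ctrl α β n}

lemma isController_modCtrl (hF : IsController F) : IsController (modCtrl S a F) := fun k xs ys =>
  ⟨fun _ => condWithFallback_nonneg (hF k xs ys).1, sum_condWithFallback⟩

lemma le_modCtrl (hF : IsController F) {k : Fin n} {xs : Fin k.val → α} {ys : Fin k.val → β}
    {x : α} (hx : x ∈ prefExt S k xs) : F k xs ys x ≤ modCtrl S a F k xs ys x :=
  le_condWithFallback (hF k xs ys).1 (hF k xs ys).2.le ((Finset.mem_filter_univ x).mpr hx)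

lemma mem_prefExt_of_modCtrl_ne_zero {k : Fin n} {xs : Fin k.val → α} {ys : Fin k.val → β}
    {x : α} (hS : (prefExt S k xs).Nonempty) (h : modCtrl S a F k xs ys x ≠ 0) :
    x ∈ prefExt S k xs := by
  obtain ⟨x₀, hx₀⟩ := hS
  exact (Finset.mem_filter_univ x).mp <|
    mem_of_condWithFallback_ne_zero ⟨x₀, (Finset.mem_filter_univ x₀).mpr hx₀⟩ h

lemma mem_of_ctrlLaw_modCtrl_ne_zero {W : α → β → ℝ} {x : Fin n → α} {y : Fin n → β}
    (hS : S.Nonempty) (h : ctrlLaw W (modCtrl S a F) x y ≠ 0) : x ∈ S := by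
  have hfactor : ∀ k, modCtrl S a F k (pre x k) (pre y k) (x k) ≠ 0 := fun k =>
    left_ne_zero_of_mul (Finset.prod_ne_zero_iff.mp h k (Finset.mem_univ k))
  have hprefix : ∀ m ≤ n, ∃ z ∈ S, ∀ i : Fin n, i.val < m → z i = x i := by
    intro m
    induction m with
    | zero => exact fun _ => hS.imp fun z hz => ⟨hz, fun i hi => absurd hi (Nat.not_lt_zero _)⟩
    | succ m ih =>
      intro hm
      obtain ⟨z, hzS, hzx⟩ := ih (Nat.le_of_succ_le hm)
      let k : Fin n := ⟨m, hm⟩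
      obtain ⟨z', hz'S, hz'x, hz'k⟩ :=
        mem_prefExt_of_modCtrl_ne_zero ⟨z k, z, hzS, fun i => hzx _ i.isLt, rfl⟩ (hfactor k)
      refine ⟨z', hz'S, fun i hi => ?_⟩
      rcases Nat.lt_succ_iff_lt_or_eq.mp hi with hlt | heq
      · exact hz'x ⟨i, hlt⟩
      · exact (Fin.ext heq : i = k) ▸ hz'k
  obtain ⟨z, hzS, hzx⟩ := hprefix n le_rfl
  exact funext (fun i => hzx i i.isLt) ▸ hzS

end ModCtrl

section Snoc

variable {α : Type*} {n : ℕ}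

lemma pre_snoc_castSucc (x : Fin n → α) (xₗ : α) (k : Fin n) :
    pre (Fin.snoc x xₗ : Fin (n + 1) → α) k.castSucc = pre x k :=
  funext fun i => Fin.snoc_castSucc (α := fun _ => α) xₗ x ⟨i, i.isLt.trans k.isLt⟩

lemma pre_snoc_last (x : Fin n → α) (xₗ : α) :
    pre (Fin.snoc x xₗ : Fin (n + 1) → α) (Fin.last n) = x :=
  funext fun i => Fin.snoc_castSucc (α := fun _ => α) xₗ x i

lemma sum_fun_fin_succ_eq_sum_snoc [Fintype α] {M : Type*} [AddCommMonoid M]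
    (f : (Fin (n + 1) → α) → M) : ∑ x, f x = ∑ x : Fin n → α, ∑ xₗ, f (Fin.snoc x xₗ) := by
  rw [← (Fin.snocEquiv fun _ => α).sum_comp, Fintype.sum_prod_type, Finset.sum_comm]
  rfl

end Snoc

section Law

variable {α β : Type*} {n : ℕ}

lemma ctrlLaw_snoc (W : α → β → ℝ) (G : Ctrl α β (n + 1)) (x : Fin n → α) (xₗ : α)
    (y : Fin n → β) (yₗ : β) :
    ctrlLaw W G (Fin.snoc x xₗ) (Fin.snoc y yₗ) =
      ctrlLaw W (fun k => G k.castSucc) x y * (G (Fin.last n) x y xₗ * W xₗ yₗ) := by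
  unfold ctrlLaw
  rw [Fin.prod_univ_castSucc]
  simp only [pre_snoc_castSucc, pre_snoc_last, Fin.snoc_castSucc, Fin.snoc_last]

theorem sum_ctrlLaw_eq_one [Fintype α] [Fintype β] (W : α → β → ℝ) (hW : IsChannel W)
    (G : Ctrl α β n) (hG : IsController G) : ∑ x, ∑ y, ctrlLaw W G x y = 1 := by
  induction n with
  | zero => simp [ctrlLaw]
  | succ n ih =>
    calc ∑ x, ∑ y, ctrlLaw W G x y
        = ∑ x : Fin n → α, ∑ xₗ, ∑ y : Fin n → β, ∑ yₗ,
            ctrlLaw W (fun k => G k.castSucc) x y * (G (Fin.last n) x y xₗ * W xₗ yₗ) := by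
          simp only [sum_fun_fin_succ_eq_sum_snoc, ctrlLaw_snoc]
      _ = ∑ x : Fin n → α, ∑ y : Fin n → β, ctrlLaw W (fun k => G k.castSucc) x y := by
          refine Finset.sum_congr rfl fun x _ => ?_
          rw [Finset.sum_comm]
          refine Finset.sum_congr rfl fun y _ => ?_
          simp only [← Finset.mul_sum, hW.2, mul_one, (hG (Fin.last n) x y).2]
      _ = 1 := ih _ fun k => hG k.castSucc

end Law


theorem stmt_16_general {n : ℕ} (W : 𝒜 → ℬ → ℝ) (hW : IsChannel W)
    (S : Set (Fin n → 𝒜)) (hS : S.Nonempty)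
    (a : Fin n → 𝒜)
    (F : Ctrl 𝒜 ℬ n) (hF : IsController F) :
    (∑ x ∈ Finset.univ.filter (fun x : Fin n → 𝒜 => x ∈ S),
        ∑ y : Fin n → ℬ, ctrlLaw W (modCtrl S a F) x y) = 1 ∧
    (∀ x ∈ S, ∀ y : Fin n → ℬ, ctrlLaw W F x y ≤ ctrlLaw W (modCtrl S a F) x y) := by
  refine ⟨?_, fun x hx y => ?_⟩
  · rw [← sum_ctrlLaw_eq_one W hW _ (isController_modCtrl hF)]
    refine Finset.sum_filter_of_ne fun x _ hx => ?_
    obtain ⟨y, -, hy⟩ := Finset.exists_ne_zero_of_sum_ne_zero hx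
    exact mem_of_ctrlLaw_modCtrl_ne_zero hS hy
  · refine Finset.prod_le_prod (fun k _ => mul_nonneg ((hF k _ _).1 _) (hW.1 _ _)) fun k _ => ?_
    exact mul_le_mul_of_nonneg_right (le_modCtrl hF ⟨x, hx, fun _ => rfl, rfl⟩) (hW.1 _ _)

/-- Remarks 1 and 2 of the paper: for any controller `F`, the modified controller `F_S`
(i) puts full mass on `S × ℬⁿ`, and (ii) dominates `F∘W` pointwise on `S × ℬⁿ`. -/
theorem stmt_16 {n : ℕ} (W : 𝒜 → ℬ → ℝ) (hW : IsChannel W)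
    (S : Set (Fin n → 𝒜)) (hS : S.Nonempty)
    (a : Fin n → 𝒜) (ha : a ∈ S)
    (F : Ctrl 𝒜 ℬ n) (hF : IsController F) :
    (∑ x ∈ Finset.univ.filter (fun x : Fin n → 𝒜 => x ∈ S),
        ∑ y : Fin n → ℬ, ctrlLaw W (modCtrl S a F) x y) = 1 ∧
    (∀ x ∈ S, ∀ y : Fin n → ℬ, ctrlLaw W F x y ≤ ctrlLaw W (modCtrl S a F) x y) :=
  stmt_16_general W hW S hS a F hF

end Paper
end
end
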